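/- arXiv:2410.17380 — 5 statements merged into one kernel-verified Lean document; each statement's English description precedes it below -/
import Mathlib

section
/- Let G be a graph with n vertices, e ≥ 1 edges, minimum degree δ, and independence number γ, and let α, β be real numbers with α ≥ β > 0. Then the largest eigenvalue λ₁ of M(G; α, β) = αD + βA satisfies λ₁ ≥ (α + β)·√(γδ²/n + e²/(n(n − γ))). -/
set_option linter.unusedSectionVars false
set_option maxHeartbeats 1000000

open Finset Matrix

section Aux
variable {V : Type*} [Fintype V] [DecidableEq V]

private def toE (f : V → ℝ) : EuclideanSpace ℝ V := WithLp.toLp 2 f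

@[simp] private lemma toE_apply (f : V → ℝ) (i : V) : toE f i = f i := rfl

private lemma inner_eq_dot (x y : EuclideanSpace ℝ V) :
    (inner ℝ x y : ℝ) = dotProduct (⇑x) (⇑y) := by
  simp [PiLp.inner_apply, dotProduct, RCLike.inner_apply, starRingEnd_apply]
  exact Finset.sum_congr rfl fun _ _ => mul_comm _ _

variable (A : Matrix V V ℝ)

private lemma transp (hA : A.IsHermitian) : Aᵀ = A := by
  rw [← Matrix.conjTranspose_eq_transpose_of_trivial]; exact hA

private lemma dot_symm (hA : A.IsHermitian) (x y : V → ℝ) :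
    dotProduct x (A *ᵥ y) = dotProduct (A *ᵥ x) y := by
  rw [Matrix.dotProduct_mulVec, ← Matrix.mulVec_transpose, transp A hA]

private lemma repr_mulVec (hA : A.IsHermitian) (x : V → ℝ) (j : V) :
    hA.eigenvectorBasis.repr (toE (A *ᵥ x)) j
      = hA.eigenvalues j * hA.eigenvectorBasis.repr (toE x) j := by
  rw [OrthonormalBasis.repr_apply_apply, OrthonormalBasis.repr_apply_apply,
    inner_eq_dot, inner_eq_dot]
  show dotProduct ⇑(hA.eigenvectorBasis j) (A *ᵥ x)
      = hA.eigenvalues j * dotProduct ⇑(hA.eigenvectorBasis j) x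
  rw [dot_symm A hA, hA.mulVec_eigenvectorBasis, smul_dotProduct]
  rfl

private lemma inner_sum_repr (hA : A.IsHermitian) (x y : EuclideanSpace ℝ V) :
    (inner ℝ x y : ℝ) = ∑ i, hA.eigenvectorBasis.repr x i * hA.eigenvectorBasis.repr y i := by
  rw [← hA.eigenvectorBasis.repr.inner_map_map x y, inner_eq_dot]
  rfl

private lemma dot_mulVec_expand (x : V → ℝ) :
    dotProduct x (A *ᵥ x) = ∑ i, ∑ j, A i j * x i * x j := by
  simp only [dotProduct, Matrix.mulVec, Finset.mul_sum]
  congr 1; ext i; congr 1; ext j; ring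

end Aux

section Key
variable {V : Type*} [Fintype V] [DecidableEq V] (A : Matrix V V ℝ)

private lemma rayleigh (hA : A.IsHermitian) (lam1 : ℝ)
    (hlam1 : ∀ i, hA.eigenvalues i ≤ lam1) (x : V → ℝ) :
    dotProduct x (A *ᵥ x) ≤ lam1 * dotProduct x x := by
  have h1 : dotProduct x (A *ᵥ x) = (inner ℝ (toE x) (toE (A *ᵥ x)) : ℝ) :=
    (inner_eq_dot (toE x) (toE (A *ᵥ x))).symm
  have h2 : dotProduct x x = (inner ℝ (toE x) (toE x) : ℝ) := (inner_eq_dot (toE x) (toE x)).symm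
  rw [h1, h2, inner_sum_repr A hA, inner_sum_repr A hA, Finset.mul_sum]
  apply Finset.sum_le_sum
  intro i _
  rw [repr_mulVec A hA x i]
  have : hA.eigenvectorBasis.repr (toE x) i * (hA.eigenvalues i * hA.eigenvectorBasis.repr (toE x) i)
      = hA.eigenvalues i * (hA.eigenvectorBasis.repr (toE x) i)^2 := by ring
  rw [this]
  have h3 : lam1 * (hA.eigenvectorBasis.repr (toE x) i * hA.eigenvectorBasis.repr (toE x) i)
      = lam1 * (hA.eigenvectorBasis.repr (toE x) i)^2 := by ring
  rw [h3]
  exact mul_le_mul_of_nonneg_right (hlam1 i) (sq_nonneg _)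

private lemma perron (hA : A.IsHermitian) (hnn : ∀ i j, 0 ≤ A i j) (lam1 : ℝ)
    (hlam1 : ∀ i, hA.eigenvalues i ≤ lam1) (j : V) :
    |hA.eigenvalues j| ≤ lam1 := by
  set v : V → ℝ := ⇑(hA.eigenvectorBasis j) with hv
  set w : V → ℝ := fun k => |v k| with hw
  have hvv : dotProduct v v = 1 := by
    have := hA.eigenvectorBasis.orthonormal.1 j
    have h2 : (inner ℝ (hA.eigenvectorBasis j) (hA.eigenvectorBasis j) : ℝ) = 1 := by
      rw [real_inner_self_eq_norm_sq, this]; norm_num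
    rw [← h2, inner_eq_dot]
  have hww : dotProduct w w = 1 := by
    rw [← hvv]
    simp only [dotProduct, hw]
    exact Finset.sum_congr rfl fun k _ => abs_mul_abs_self _
  have heig : dotProduct v (A *ᵥ v) = hA.eigenvalues j := by
    rw [hA.mulVec_eigenvectorBasis, dotProduct_smul]
    simp [← hv, hvv]
  have habs : |dotProduct v (A *ᵥ v)| ≤ dotProduct w (A *ᵥ w) := by
    rw [dot_mulVec_expand, dot_mulVec_expand]
    calc |∑ i, ∑ k, A i k * v i * v k| ≤ ∑ i, |∑ k, A i k * v i * v k| :=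
          Finset.abs_sum_le_sum_abs _ _
      _ ≤ ∑ i, ∑ k, |A i k * v i * v k| :=
          Finset.sum_le_sum fun i _ => Finset.abs_sum_le_sum_abs _ _
      _ = ∑ i, ∑ k, A i k * w i * w k := by
          refine Finset.sum_congr rfl fun i _ => Finset.sum_congr rfl fun k _ => ?_
          rw [abs_mul, abs_mul, abs_of_nonneg (hnn i k)]
  have hray := rayleigh A hA lam1 hlam1 w
  rw [hww, mul_one] at hray
  rw [heig] at habs
  exact habs.trans hray

private lemma key_quad (hA : A.IsHermitian) (hnn : ∀ i j, 0 ≤ A i j) (lam1 : ℝ)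
    (hlam1 : ∀ i, hA.eigenvalues i ≤ lam1) (x : V → ℝ) :
    dotProduct (A *ᵥ x) (A *ᵥ x) ≤ lam1^2 * dotProduct x x := by
  have h1 : dotProduct (A *ᵥ x) (A *ᵥ x)
      = ∑ i, (hA.eigenvalues i * hA.eigenvectorBasis.repr (toE x) i)^2 := by
    have := inner_sum_repr A hA (toE (A *ᵥ x)) (toE (A *ᵥ x))
    rw [inner_eq_dot] at this
    rw [show dotProduct (A *ᵥ x) (A *ᵥ x) = dotProduct ⇑(toE (A *ᵥ x)) ⇑(toE (A *ᵥ x)) from rfl, this]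
    refine Finset.sum_congr rfl fun i _ => ?_
    rw [repr_mulVec A hA x i]
    ring
  have h2 : dotProduct x x = ∑ i, (hA.eigenvectorBasis.repr (toE x) i)^2 := by
    have := inner_sum_repr A hA (toE x) (toE x)
    rw [inner_eq_dot] at this
    rw [show dotProduct x x = dotProduct ⇑(toE x) ⇑(toE x) from rfl, this]
    exact Finset.sum_congr rfl fun i _ => (sq _).symm
  rw [h1, h2, Finset.mul_sum]
  apply Finset.sum_le_sum
  intro i _
  rw [mul_pow]
  apply mul_le_mul_of_nonneg_right _ (sq_nonneg _)
  calc (hA.eigenvalues i)^2 = |hA.eigenvalues i|^2 := (sq_abs _).symm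
    _ ≤ lam1^2 := by
        apply pow_le_pow_left₀ (abs_nonneg _) (perron A hA hnn lam1 hlam1 i)

end Key

section Comb
variable {V : Type*} [Fintype V] [DecidableEq V] (G : SimpleGraph V) [DecidableRel G.Adj]

private lemma sum_deg_indep_le (S : Finset V) (hS : ∀ x ∈ S, ∀ y ∈ S, ¬ G.Adj x y) :
    ∑ v ∈ S, G.degree v ≤ G.edgeFinset.card := by
  have hdisj : ∀ x ∈ S, ∀ y ∈ S, x ≠ y →
      Disjoint (G.incidenceFinset x) (G.incidenceFinset y) := by
    intro x hx y hy hxy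
    rw [Finset.disjoint_left]
    intro e hex hey
    rw [SimpleGraph.mem_incidenceFinset] at hex hey
    have hexy : e = s(x, y) := (Sym2.mem_and_mem_iff hxy).mp ⟨hex.2, hey.2⟩
    exact hS x hx y hy (by rw [← SimpleGraph.mem_edgeSet, ← hexy]; exact hex.1)
  have h1 : ∑ v ∈ S, (G.incidenceFinset v).card
      = (S.biUnion (fun v => G.incidenceFinset v)).card :=
    (Finset.card_biUnion hdisj).symm
  have h2 : ∑ v ∈ S, G.degree v = ∑ v ∈ S, (G.incidenceFinset v).card :=
    Finset.sum_congr rfl fun v _ => (G.card_incidenceFinset_eq_degree v).symm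
  rw [h2, h1]
  apply Finset.card_le_card
  intro e he
  rw [Finset.mem_biUnion] at he
  obtain ⟨v, _, hev⟩ := he
  rw [SimpleGraph.mem_incidenceFinset] at hev
  rw [SimpleGraph.mem_edgeFinset]
  exact hev.1

end Comb

theorem largest_eigenvalue_lower_bound
    {V : Type*} [Fintype V] [DecidableEq V]
    (G : SimpleGraph V) [DecidableRel G.Adj]
    (he : 1 ≤ G.edgeFinset.card)
    (γ : ℕ)
    (hγ : IsGreatest {m : ℕ | ∃ s : Finset V,
      (∀ x ∈ s, ∀ y ∈ s, ¬ G.Adj x y) ∧ s.card = m} γ)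
    (α β : ℝ) (hαβ : β ≤ α) (hβ : 0 < β)
    (M : Matrix V V ℝ)
    (hMdef : M = α • Matrix.diagonal (fun v => (G.degree v : ℝ)) + β • G.adjMatrix ℝ)
    (hHerm : M.IsHermitian)
    (lam1 : ℝ) (hlam1 : lam1 = ⨆ i, hHerm.eigenvalues i) :
    lam1 ≥ (α + β) * Real.sqrt
      ((γ : ℝ) * (G.minDegree : ℝ) ^ 2 / (Fintype.card V : ℝ) +
        (G.edgeFinset.card : ℝ) ^ 2 /
          ((Fintype.card V : ℝ) * ((Fintype.card V : ℝ) - (γ : ℝ)))) := by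
  classical
  obtain ⟨e0, he0⟩ := Finset.card_pos.mp he
  have hadj : ∃ x y, G.Adj x y := by
    induction e0 using Sym2.ind with
    | _ x y => exact ⟨x, y, (G.mem_edgeSet).mp (SimpleGraph.mem_edgeFinset.mp he0)⟩
  obtain ⟨x0, y0, hxy0⟩ := hadj
  haveI : Nonempty V := ⟨x0⟩
  obtain ⟨S, hSind, hScard⟩ := hγ.1
  set n : ℕ := Fintype.card V with hn
  have hnpos : 0 < n := Fintype.card_pos
  have hγlt : γ < n := by
    by_contra h
    push_neg at h
    have hle : γ ≤ n := hScard ▸ Finset.card_le_univ S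
    have hSuniv : S = Finset.univ := Finset.eq_univ_of_card S (by omega)
    exact hSind x0 (by simp [hSuniv]) y0 (by simp [hSuniv]) hxy0
  set d : V → ℝ := fun v => (G.degree v : ℝ) with hd
  set δ : ℝ := (G.minDegree : ℝ) with hδdef
  have hα : 0 < α := lt_of_lt_of_le hβ hαβ
  -- nonnegative entries
  have hnn : ∀ i j, 0 ≤ M i j := by
    intro i j
    rw [hMdef]
    simp only [Matrix.add_apply, Matrix.smul_apply, smul_eq_mul, Matrix.diagonal_apply,
      SimpleGraph.adjMatrix_apply]
    split_ifs <;> positivity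
  have hlam_ub : ∀ i, hHerm.eigenvalues i ≤ lam1 := by
    intro i; rw [hlam1]; exact le_ciSup (Finite.bddAbove_range _) i
  have hlam_nonneg : 0 ≤ lam1 :=
    le_trans (abs_nonneg _) (perron M hHerm hnn lam1 hlam_ub (Classical.arbitrary V))
  -- row sums
  have hrow : M *ᵥ (fun _ => (1 : ℝ)) = fun v => (α + β) * d v := by
    funext v
    rw [hMdef, Matrix.add_mulVec, Matrix.smul_mulVec, Matrix.smul_mulVec]
    simp only [Pi.add_apply, Pi.smul_apply, smul_eq_mul]
    rw [Matrix.mulVec_diagonal, SimpleGraph.adjMatrix_mulVec_apply]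
    simp only [Finset.sum_const, nsmul_eq_mul, mul_one,
      SimpleGraph.card_neighborFinset_eq_degree, hd]
    ring
  have hQuad := key_quad M hHerm hnn lam1 hlam_ub (fun _ => (1 : ℝ))
  have hdot1 : dotProduct (fun _ : V => (1 : ℝ)) (fun _ => (1 : ℝ)) = (n : ℝ) := by
    simp [dotProduct, hn]
  have hdotM : dotProduct (M *ᵥ (fun _ => (1 : ℝ))) (M *ᵥ (fun _ => (1 : ℝ)))
      = (α + β) ^ 2 * ∑ v, (d v) ^ 2 := by
    rw [hrow]
    simp only [dotProduct]
    rw [Finset.mul_sum]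
    exact Finset.sum_congr rfl fun v _ => by ring
  rw [hdot1, hdotM] at hQuad
  -- combinatorial bounds
  have hδle : ∀ v, δ ≤ d v := fun v => by
    have := G.minDegree_le_degree v
    simp only [hδdef, hd]
    exact_mod_cast this
  have hδ0 : (0 : ℝ) ≤ δ := by rw [hδdef]; positivity
  have hS2 : (γ : ℝ) * δ ^ 2 ≤ ∑ v ∈ S, (d v) ^ 2 := by
    calc (γ : ℝ) * δ ^ 2 = ∑ _v ∈ S, δ ^ 2 := by
          rw [Finset.sum_const, hScard, nsmul_eq_mul]
      _ ≤ ∑ v ∈ S, (d v) ^ 2 :=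
          Finset.sum_le_sum fun v _ => pow_le_pow_left₀ hδ0 (hδle v) 2
  have hEdgeN : G.edgeFinset.card ≤ ∑ v ∈ Sᶜ, G.degree v := by
    have h2e : ∑ v, G.degree v = 2 * G.edgeFinset.card := G.sum_degrees_eq_twice_card_edges
    have hsplit : ∑ v ∈ S, G.degree v + ∑ v ∈ Sᶜ, G.degree v = ∑ v, G.degree v :=
      Finset.sum_add_sum_compl S _
    have hint := sum_deg_indep_le G S hSind
    omega
  have hEdge : (G.edgeFinset.card : ℝ) ≤ ∑ v ∈ Sᶜ, d v := by
    have := hEdgeN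
    calc (G.edgeFinset.card : ℝ) ≤ ((∑ v ∈ Sᶜ, G.degree v : ℕ) : ℝ) := by exact_mod_cast this
      _ = ∑ v ∈ Sᶜ, d v := by push_cast [hd]; rfl
  have hcardc : ((Sᶜ : Finset V).card : ℝ) = (n : ℝ) - (γ : ℝ) := by
    rw [Finset.card_compl, hScard]
    rw [← hn]
    push_cast [Nat.cast_sub (le_of_lt hγlt)]
    ring
  have hpos : (0 : ℝ) < (n : ℝ) - (γ : ℝ) := by
    have : (γ : ℝ) < (n : ℝ) := by exact_mod_cast hγlt
    linarith
  have hCS : (∑ v ∈ Sᶜ, d v) ^ 2 ≤ ((n : ℝ) - γ) * ∑ v ∈ Sᶜ, (d v) ^ 2 := by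
    rw [← hcardc]
    exact sq_sum_le_card_mul_sum_sq
  have hSc2 : (G.edgeFinset.card : ℝ) ^ 2 / ((n : ℝ) - γ) ≤ ∑ v ∈ Sᶜ, (d v) ^ 2 := by
    rw [div_le_iff₀ hpos]
    calc (G.edgeFinset.card : ℝ) ^ 2 ≤ (∑ v ∈ Sᶜ, d v) ^ 2 :=
          pow_le_pow_left₀ (by positivity) hEdge 2
      _ ≤ ((n : ℝ) - γ) * ∑ v ∈ Sᶜ, (d v) ^ 2 := hCS
      _ = (∑ v ∈ Sᶜ, (d v) ^ 2) * ((n : ℝ) - γ) := by ring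
  have hTot : (γ : ℝ) * δ ^ 2 + (G.edgeFinset.card : ℝ) ^ 2 / ((n : ℝ) - γ)
      ≤ ∑ v, (d v) ^ 2 := by
    rw [← Finset.sum_add_sum_compl S fun v => (d v) ^ 2]
    exact add_le_add hS2 hSc2
  -- final arithmetic
  set T : ℝ := (γ : ℝ) * δ ^ 2 + (G.edgeFinset.card : ℝ) ^ 2 / ((n : ℝ) - γ) with hT
  set Q : ℝ := (γ : ℝ) * δ ^ 2 / (n : ℝ) +
      (G.edgeFinset.card : ℝ) ^ 2 / ((n : ℝ) * ((n : ℝ) - γ)) with hQ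
  have hnposR : (0 : ℝ) < (n : ℝ) := by exact_mod_cast hnpos
  have hQT : Q = T / (n : ℝ) := by
    rw [hQ, hT]
    field_simp
  have h1 : (α + β) ^ 2 * Q ≤ lam1 ^ 2 := by
    rw [hQT, ← mul_div_assoc, div_le_iff₀ hnposR]
    calc (α + β) ^ 2 * T ≤ (α + β) ^ 2 * ∑ v, (d v) ^ 2 :=
          mul_le_mul_of_nonneg_left hTot (sq_nonneg _)
      _ ≤ lam1 ^ 2 * (n : ℝ) := hQuad
  have hfin : (α + β) * Real.sqrt Q ≤ lam1 := by
    have h2 : Real.sqrt ((α + β) ^ 2 * Q) ≤ Real.sqrt (lam1 ^ 2) := Real.sqrt_le_sqrt h1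
    rwa [Real.sqrt_mul (sq_nonneg _), Real.sqrt_sq (by positivity), Real.sqrt_sq hlam_nonneg]
      at h2
  exact hfin
end

section
/- Let G be a graph with n vertices, e ≥ 1 edges, maximum degree Δ, and independence number γ, and let α, β be real numbers with α ≥ β > 0. Then the smallest eigenvalue λₙ of M(G; α, β) = αD + βA satisfies λₙ ≤ (α + β)·√((n − γ)Δ²/n + e²/(nγ)). -/
open Finset Matrix



lemma sum_dotProduct' {n ι : Type*} [Fintype n] (s : Finset ι) (f : ι → n → ℝ) (y : n → ℝ) :
    (∑ i ∈ s, f i) ⬝ᵥ y = ∑ i ∈ s, (f i ⬝ᵥ y) := by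
  simp only [dotProduct, Finset.sum_apply, Finset.sum_mul]
  exact Finset.sum_comm

lemma rayleigh_min {n : Type*} [Fintype n] [DecidableEq n] [Nonempty n]
    {A : Matrix n n ℝ} (hA : A.IsHermitian) (x : n → ℝ) :
    (⨅ i, hA.eigenvalues i) * (x ⬝ᵥ x) ≤ x ⬝ᵥ (A *ᵥ x) := by
  classical
  have hx : (∑ i, (hA.eigenvectorBasis.repr (WithLp.toLp 2 x)) i • (hA.eigenvectorBasis i : n → ℝ)) = x := by
    have := hA.eigenvectorBasis.sum_repr (WithLp.toLp 2 x)
    have := congrArg (fun y : EuclideanSpace ℝ n => (y : n → ℝ)) this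
    simpa using this
  have hrepr : ∀ i, (hA.eigenvectorBasis i : n → ℝ) ⬝ᵥ x = (hA.eigenvectorBasis.repr (WithLp.toLp 2 x)) i := by
    intro i
    rw [hA.eigenvectorBasis.repr_apply_apply (WithLp.toLp 2 x) i]
    simp [PiLp.inner_apply, RCLike.inner_apply, dotProduct, mul_comm]
  have hAT : Aᵀ = A := by
    ext i k
    have := congrFun (congrFun hA.eq i) k
    simpa using this
  have key : ∀ j, (hA.eigenvectorBasis j : n → ℝ) ⬝ᵥ (A *ᵥ x)
      = hA.eigenvalues j * (hA.eigenvectorBasis.repr (WithLp.toLp 2 x)) j := by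
    intro j
    have h1 : (hA.eigenvectorBasis j : n → ℝ) ⬝ᵥ (A *ᵥ x)
        = (A *ᵥ (hA.eigenvectorBasis j : n → ℝ)) ⬝ᵥ x := by
      rw [Matrix.dotProduct_mulVec]
      congr 1
      rw [← Matrix.mulVec_transpose, hAT]
    rw [h1, show (A *ᵥ (hA.eigenvectorBasis j : n → ℝ))
        = hA.eigenvalues j • (hA.eigenvectorBasis j : n → ℝ) from hA.mulVec_eigenvectorBasis j,
      smul_dotProduct, hrepr]
    simp
  have h1 : x ⬝ᵥ (A *ᵥ x) = ∑ j, hA.eigenvalues j * (hA.eigenvectorBasis.repr (WithLp.toLp 2 x)) j ^ 2 := by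
    nth_rewrite 1 [← hx]
    rw [sum_dotProduct']
    refine Finset.sum_congr rfl fun j _ => ?_
    rw [smul_dotProduct, key, smul_eq_mul]
    ring
  have h2 : x ⬝ᵥ x = ∑ j, (hA.eigenvectorBasis.repr (WithLp.toLp 2 x)) j ^ 2 := by
    nth_rewrite 1 [← hx]
    rw [sum_dotProduct']
    refine Finset.sum_congr rfl fun j _ => ?_
    rw [smul_dotProduct, hrepr, smul_eq_mul]
    ring
  rw [h1, h2, Finset.mul_sum]
  refine Finset.sum_le_sum fun j _ => ?_
  have hle : (⨅ i, hA.eigenvalues i) ≤ hA.eigenvalues j :=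
    ciInf_le (Finite.bddBelow_range _) j
  exact mul_le_mul_of_nonneg_right hle (sq_nonneg _)

set_option maxHeartbeats 1000000 in
theorem smallest_eigenvalue_upper_bound
    {V : Type*} [Fintype V] [DecidableEq V]
    (G : SimpleGraph V) [DecidableRel G.Adj]
    (he : 1 ≤ G.edgeFinset.card)
    (γ : ℕ)
    (hγ : IsGreatest {m : ℕ | ∃ s : Finset V,
      (∀ x ∈ s, ∀ y ∈ s, ¬ G.Adj x y) ∧ s.card = m} γ)
    (α β : ℝ) (hαβ : β ≤ α) (hβ : 0 < β)
    (M : Matrix V V ℝ)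
    (hMdef : M = α • Matrix.diagonal (fun v => (G.degree v : ℝ)) + β • G.adjMatrix ℝ)
    (hHerm : M.IsHermitian)
    (lamn : ℝ) (hlamn : lamn = ⨅ i, hHerm.eigenvalues i) :
    lamn ≤ (α + β) * Real.sqrt
      (((Fintype.card V : ℝ) - (γ : ℝ)) * (G.maxDegree : ℝ) ^ 2 / (Fintype.card V : ℝ) +
        (G.edgeFinset.card : ℝ) ^ 2 / ((Fintype.card V : ℝ) * (γ : ℝ))) := by
  classical
  have hV : Nonempty V := by
    obtain ⟨ed, hed⟩ := Finset.card_pos.mp he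
    induction ed using Sym2.ind with | _ a b => exact ⟨a⟩
  obtain ⟨s, hind, hcard⟩ := hγ.1
  have hγ1 : 1 ≤ γ := by
    obtain ⟨v⟩ := hV
    exact hγ.2 ⟨{v}, by simp, by simp⟩
  have hγn : γ ≤ Fintype.card V := hcard ▸ Finset.card_le_univ s
  -- the sum of degrees over s
  have hmΔ : ∑ v ∈ s, G.degree v ≤ γ * G.maxDegree := by
    calc ∑ v ∈ s, G.degree v ≤ ∑ _v ∈ s, G.maxDegree :=
          Finset.sum_le_sum fun v _ => G.degree_le_maxDegree v
      _ = γ * G.maxDegree := by rw [Finset.sum_const, hcard, smul_eq_mul]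
  have hme : ∑ v ∈ s, G.degree v ≤ G.edgeFinset.card := by
    have hdisj : ∀ a ∈ s, ∀ b ∈ s, a ≠ b →
        Disjoint (G.incidenceFinset a) (G.incidenceFinset b) := by
      intro a ha b hb hab
      rw [Finset.disjoint_left]
      intro ed hea heb
      rw [SimpleGraph.mem_incidenceFinset] at hea heb
      have hmem : a ∈ ed ∧ b ∈ ed := ⟨hea.2, heb.2⟩
      rw [Sym2.mem_and_mem_iff hab] at hmem
      exact hind a ha b hb (G.mem_edgeSet.mp (hmem ▸ hea.1))
    calc ∑ v ∈ s, G.degree v = ∑ v ∈ s, (G.incidenceFinset v).card := by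
          simp [SimpleGraph.card_incidenceFinset_eq_degree]
      _ = (s.biUnion fun v => G.incidenceFinset v).card := (Finset.card_biUnion hdisj).symm
      _ ≤ G.edgeFinset.card := by
          refine Finset.card_le_card ?_
          intro ed hed
          rw [Finset.mem_biUnion] at hed
          obtain ⟨v, _, h⟩ := hed
          rw [SimpleGraph.mem_incidenceFinset] at h
          exact SimpleGraph.mem_edgeFinset.mpr h.1
  -- Rayleigh with the indicator vector of s
  set x : V → ℝ := fun v => if v ∈ s then (1 : ℝ) else 0 with hxdef
  have hxx : x ⬝ᵥ x = (γ : ℝ) := by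
    simp only [dotProduct, hxdef, ite_mul, one_mul, zero_mul, Finset.sum_ite_mem,
      Finset.univ_inter]
    simp [hcard]
  have hMx : ∀ v, (M *ᵥ x) v = ∑ w ∈ s, M v w := by
    intro v
    simp only [mulVec, dotProduct, hxdef, mul_ite, mul_one, mul_zero, Finset.sum_ite_mem,
      Finset.univ_inter]
  have hxMx : x ⬝ᵥ (M *ᵥ x) = α * ∑ v ∈ s, (G.degree v : ℝ) := by
    have h0 : x ⬝ᵥ (M *ᵥ x) = ∑ v ∈ s, ∑ w ∈ s, M v w := by
      simp only [dotProduct, hMx, hxdef, ite_mul, one_mul, zero_mul, Finset.sum_ite_mem,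
        Finset.univ_inter]
      exact Finset.sum_congr rfl fun v _ => hMx v
    rw [h0, Finset.mul_sum]
    refine Finset.sum_congr rfl fun v hv => ?_
    rw [hMdef]
    simp only [Matrix.add_apply, Matrix.smul_apply, smul_eq_mul]
    rw [Finset.sum_add_distrib]
    have h1 : ∑ w ∈ s, α * Matrix.diagonal (fun v => (G.degree v : ℝ)) v w
        = α * (G.degree v : ℝ) := by
      rw [← Finset.mul_sum]
      congr 1
      simp only [Matrix.diagonal_apply]
      rw [Finset.sum_ite_eq s v (fun w => (G.degree v : ℝ))]
      simp [hv]
    have h2 : ∑ w ∈ s, β * (G.adjMatrix ℝ) v w = 0 := by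
      refine Finset.sum_eq_zero fun w hw => ?_
      simp [SimpleGraph.adjMatrix_apply, hind v hv w hw]
    rw [h1, h2, add_zero]
  have hray : lamn * (γ : ℝ) ≤ α * ∑ v ∈ s, (G.degree v : ℝ) := by
    rw [hlamn, ← hxx, ← hxMx]
    exact rayleigh_min hHerm x
  -- real-number abbreviations
  set N : ℝ := (Fintype.card V : ℝ) with hN
  set gr : ℝ := (γ : ℝ) with hgr
  set D : ℝ := (G.maxDegree : ℝ) with hD
  set E : ℝ := (G.edgeFinset.card : ℝ) with hE
  set mr : ℝ := ∑ v ∈ s, (G.degree v : ℝ) with hmr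
  have hg1 : (1 : ℝ) ≤ gr := by rw [hgr]; exact_mod_cast hγ1
  have hg0 : (0 : ℝ) < gr := by linarith
  have hgN : gr ≤ N := by rw [hgr, hN]; exact_mod_cast hγn
  have hN0 : (0 : ℝ) < N := by linarith
  have hD0 : (0 : ℝ) ≤ D := by positivity
  have hE0 : (0 : ℝ) ≤ E := by positivity
  have hmE : mr ≤ E := by
    rw [hmr, hE, ← Nat.cast_sum]
    exact_mod_cast hme
  have hmD : mr ≤ gr * D := by
    rw [hmr, hgr, hD, ← Nat.cast_sum, ← Nat.cast_mul]
    exact_mod_cast hmΔ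
  have hα0 : (0 : ℝ) < α := lt_of_lt_of_le hβ hαβ
  -- c := min D (E/gr)
  set c : ℝ := min D (E / gr) with hcdef
  have hc0 : 0 ≤ c := le_min hD0 (by positivity)
  have hlamc : lamn ≤ α * c := by
    rcases le_total D (E / gr) with h | h
    · have : c = D := min_eq_left h
      rw [this]
      nlinarith [hray, hmD]
    · have : c = E / gr := min_eq_right h
      rw [this, ← mul_div_assoc, le_div_iff₀ hg0]
      nlinarith [hray, hmE]
  have hX : c ^ 2 ≤ (N - gr) * D ^ 2 / N + E ^ 2 / (N * gr) := by
    have hcD : c ≤ D := min_le_left _ _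
    have hcE : c * gr ≤ E := by
      have := min_le_right D (E / gr)
      calc c * gr ≤ (E / gr) * gr := by nlinarith
        _ = E := by field_simp
    have hc2D : c ^ 2 ≤ D ^ 2 := pow_le_pow_left₀ hc0 hcD 2
    have hc2E : (c * gr) ^ 2 ≤ E ^ 2 := pow_le_pow_left₀ (by positivity) hcE 2
    have t1 : 0 ≤ (N - gr) * gr * (D ^ 2 - c ^ 2) :=
      mul_nonneg (mul_nonneg (sub_nonneg.mpr hgN) hg0.le) (sub_nonneg.mpr hc2D)
    have hrw : (N - gr) * D ^ 2 / N + E ^ 2 / (N * gr)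
        = ((N - gr) * D ^ 2 * gr + E ^ 2) / (N * gr) := by
      field_simp
    rw [hrw, le_div_iff₀ (by positivity)]
    nlinarith [t1, hc2E]
  have hsqrt : c ≤ Real.sqrt ((N - gr) * D ^ 2 / N + E ^ 2 / (N * gr)) := by
    have := Real.sqrt_le_sqrt hX
    rwa [Real.sqrt_sq hc0] at this
  calc lamn ≤ α * c := hlamc
    _ ≤ (α + β) * Real.sqrt ((N - gr) * D ^ 2 / N + E ^ 2 / (N * gr)) := by
        apply mul_le_mul (by linarith) hsqrt hc0 (by linarith)
end

section
/- Let G be a k-connected graph of order n ≥ 3 with independence number γ. If γ ≤ k, then G is Hamiltonian. -/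
open Finset

namespace ChvatalErdosAux

variable {V : Type*} [DecidableEq V] {G : SimpleGraph V}

/-- total version of `List.next`. -/
def nxt (l : List V) (x : V) : V := if h : x ∈ l then l.next x h else x

lemma nxt_eq (l : List V) (x : V) (h : x ∈ l) : nxt l x = l.next x h := dif_pos h

lemma nxt_mem {l : List V} {x : V} (h : x ∈ l) : nxt l x ∈ l := by
  rw [nxt_eq l x h]; exact List.next_mem _ _ _

lemma nxt_congr {l l' : List V} (h : l ~r l') (hn : l.Nodup) (x : V) :
    nxt l x = nxt l' x := by
  by_cases hx : x ∈ l
  · rw [nxt_eq l x hx, nxt_eq l' x (h.mem_iff.mp hx)]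
    exact List.isRotated_next_eq h hn hx
  · rw [nxt, dif_neg hx, nxt, dif_neg (fun hx' => hx (h.mem_iff.mpr hx'))]

lemma nxt_injOn {l : List V} (hn : l.Nodup) {x y : V} (hx : x ∈ l) (hy : y ∈ l)
    (hxy : nxt l x = nxt l y) : x = y := by
  rw [nxt_eq l x hx, nxt_eq l y hy] at hxy
  have h1 := List.prev_next l hn x hx
  have h2 := List.prev_next l hn y hy
  rw [← h1, ← h2]
  congr 1

lemma nxt_getLast {l : List V} (hn : l.Nodup) (hne : l ≠ []) :
    nxt l (l.getLast hne) = l.head hne := by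
  rcases l with - | ⟨y, l₂⟩
  · exact absurd rfl hne
  rcases l₂ with - | ⟨z, l₃⟩
  · simp [nxt]
  · have hne₂ : z :: l₃ ≠ [] := List.cons_ne_nil _ _
    have hmem : (y :: z :: l₃).getLast hne ∈ z :: l₃ := by
      rw [List.getLast_cons hne₂]; exact List.getLast_mem _
    have hy : (y :: z :: l₃).getLast hne ≠ y := by
      intro h
      have := hn
      rw [List.nodup_cons] at this
      exact this.1 (h ▸ hmem)
    rw [nxt_eq _ _ (List.mem_cons_of_mem _ hmem)]
    rw [List.next_getLast_cons _ _ hmem y (List.mem_cons_of_mem _ hmem) hy rfl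
      (List.nodup_cons.mp hn).2]
    simp

end ChvatalErdosAux

namespace ChvatalErdosAux

open SimpleGraph Walk

variable {V : Type*} [DecidableEq V] {G : SimpleGraph V}

lemma nxt_of_getLast {l : List V} (hn : l.Nodup) (hne : l ≠ []) {b : V}
    (h : l.getLast hne = b) : nxt l b = l.head hne := by
  rw [← h]; exact nxt_getLast hn hne

lemma cycle_getVert_one {b : V} (D : G.Walk b b) (hD : D.IsCycle) :
    D.getVert 1 = nxt D.support.tail b := by
  cases D with
  | nil => exact absurd rfl hD.ne_nil
  | @cons _ c _ e q =>
    have hs : (Walk.cons e q).support.tail = q.support := by simp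
    rw [hs]
    have hne : q.support ≠ [] := q.support_ne_nil
    have hlast : q.support.getLast hne = b := q.getLast_support
    have hnodup : q.support.Nodup := by rw [← hs]; exact hD.support_nodup
    have hhead : q.support.head hne = c := q.head_support
    have key : nxt q.support b = q.support.head hne :=
      nxt_of_getLast hnodup hne hlast
    rw [Walk.getVert_cons_succ, Walk.getVert_zero, key, hhead]

lemma cycle_decomp {b : V} (D : G.Walk b b) (hD : D.IsCycle) :
    ∃ (c : V) (e : G.Adj b c) (q : G.Walk c b),
      D = Walk.cons e q ∧ c = nxt D.support.tail b ∧ q.support = D.support.tail := by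
  cases D with
  | nil => exact absurd rfl hD.ne_nil
  | @cons _ c _ e q =>
    refine ⟨c, e, q, rfl, ?_, by simp⟩
    have := cycle_getVert_one (Walk.cons e q) hD
    rwa [Walk.getVert_cons_succ, Walk.getVert_zero] at this

lemma drop_getVert_one {b c : V} (e : G.Adj b c) (q : G.Walk c b)
    (hC : (Walk.cons e q).IsCycle) (w : V) (hw : w ∈ q.support) (hwb : w ≠ b) :
    (q.dropUntil w hw).getVert 1 = nxt q.support w := by
  have hw' : w ∈ (Walk.cons e q).support := by simp [hw]
  have hdrop : (Walk.cons e q).dropUntil w hw' = q.dropUntil w hw := by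
    rw [Walk.dropUntil]
    exact dif_neg (fun h => hwb h.symm)
  have hrotC : ((Walk.cons e q).rotate w hw').IsCycle := hC.rotate hw'
  have h1 : ((Walk.cons e q).rotate w hw').getVert 1
      = nxt ((Walk.cons e q).rotate w hw').support.tail w := cycle_getVert_one _ hrotC
  have h2 : nxt ((Walk.cons e q).rotate w hw').support.tail w
      = nxt (Walk.cons e q).support.tail w :=
    nxt_congr (Walk.support_rotate _ w hw') hrotC.support_nodup w
  have hs : (Walk.cons e q).support.tail = q.support := by simp
  have hrot : (Walk.cons e q).rotate w hw'
      = ((Walk.cons e q).dropUntil w hw').append ((Walk.cons e q).takeUntil w hw') := rfl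
  have hnonnil : ((Walk.cons e q).dropUntil w hw').length ≠ 0 := by
    rw [hdrop]
    intro h0
    have := Walk.nil_iff_length_eq.mpr h0
    exact (Walk.not_nil_of_ne hwb) this
  rw [h2, hs] at h1
  rw [hrot, Walk.getVert_append] at h1
  rw [← hdrop]
  rcases Nat.lt_or_ge 1 ((Walk.cons e q).dropUntil w hw').length with hlt | hge
  · rwa [if_pos hlt] at h1
  · have hlen1 : ((Walk.cons e q).dropUntil w hw').length = 1 := by omega
    rw [if_neg (by omega), hlen1] at h1
    simp only [Nat.sub_self, Walk.getVert_zero] at h1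
    have hgv : ((Walk.cons e q).dropUntil w hw').getVert 1 = b := by
      rw [← hlen1]; exact Walk.getVert_length _
    rw [hgv]; exact h1

end ChvatalErdosAux


open ChvatalErdosAux SimpleGraph Walk

theorem chvatal_erdos_hamiltonian
    {V : Type*} [Fintype V] [DecidableEq V]
    (G : SimpleGraph V) [DecidableRel G.Adj]
    (k : ℕ)
    (hconn : k < Fintype.card V ∧
      ∀ S : Finset V, S.card < k → (G.induce {v | v ∉ S}).Connected)
    (hn : 3 ≤ Fintype.card V)
    (γ : ℕ)
    (hγ : IsGreatest {m : ℕ | ∃ s : Finset V,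
      (∀ x ∈ s, ∀ y ∈ s, ¬ G.Adj x y) ∧ s.card = m} γ)
    (hγk : γ ≤ k) :
    G.IsHamiltonian := by
  classical
  obtain ⟨hkcard, hconn2⟩ := hconn
  have hγmax := hγ.2
  have hV : Nonempty V := by
    rw [← Fintype.card_pos_iff]; omega
  obtain ⟨x₀⟩ := hV
  have hγ1 : 1 ≤ γ := hγmax ⟨{x₀}, by
    intro y hy z hz
    simp only [Finset.mem_singleton] at hy hz
    subst hy; subst hz; exact G.irrefl, Finset.card_singleton x₀⟩
  have hk1 : 1 ≤ k := le_trans hγ1 hγk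
  -- minimum degree at least 2
  have hdeg : ∀ v : V, 2 ≤ G.degree v := by
    intro v
    rcases Nat.lt_or_ge γ 2 with hγ2 | hγ2
    · -- γ = 1 : G is complete
      have hcompl : ∀ y z : V, y ≠ z → G.Adj y z := by
        intro y z hyz; by_contra hnadj
        have h2 : 2 ≤ γ := by
          apply hγmax
          refine ⟨{y, z}, ?_, ?_⟩
          · intro p hp q hq hadj
            simp only [Finset.mem_insert, Finset.mem_singleton] at hp hq
            rcases hp with rfl | rfl <;> rcases hq with rfl | rfl
            · exact G.irrefl hadj
            · exact hnadj hadj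
            · exact hnadj hadj.symm
            · exact G.irrefl hadj
          · rw [Finset.card_insert_of_notMem (by simp [hyz]), Finset.card_singleton]
        omega
      have h2 : 2 ≤ (Finset.univ.erase v).card := by
        rw [Finset.card_erase_of_mem (Finset.mem_univ v), Finset.card_univ]; omega
      obtain ⟨y, hy, z, hz, hyz⟩ := Finset.one_lt_card.mp h2
      have hsub : ({y, z} : Finset V) ⊆ G.neighborFinset v := by
        intro w hw
        simp only [Finset.mem_insert, Finset.mem_singleton] at hw
        rw [SimpleGraph.mem_neighborFinset]
        rcases hw with rfl | rfl
        · exact (hcompl w v (Finset.ne_of_mem_erase hy)).symm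
        · exact (hcompl w v (Finset.ne_of_mem_erase hz)).symm
      calc 2 = ({y, z} : Finset V).card := by
            rw [Finset.card_insert_of_notMem (by simp [hyz]), Finset.card_singleton]
        _ ≤ (G.neighborFinset v).card := Finset.card_le_card hsub
        _ = G.degree v := G.card_neighborFinset_eq_degree v
    · -- k ≥ 2
      have hk2 : 2 ≤ k := le_trans hγ2 hγk
      by_contra hdeg2
      push_neg at hdeg2
      have hcard : (G.neighborFinset v).card < k := by
        rw [G.card_neighborFinset_eq_degree]; omega
      have conn := hconn2 _ hcard
      have hcard2 : (insert v (G.neighborFinset v)).card < Fintype.card V := by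
        have := Finset.card_insert_le v (G.neighborFinset v)
        rw [G.card_neighborFinset_eq_degree] at *
        omega
      obtain ⟨w, hw⟩ : ∃ w, w ∉ insert v (G.neighborFinset v) := by
        by_contra hall
        push_neg at hall
        have : (Finset.univ : Finset V) ⊆ insert v (G.neighborFinset v) :=
          fun z _ => hall z
        have := Finset.card_le_card this
        rw [Finset.card_univ] at this
        omega
      have hwv : w ≠ v := fun h => hw (by rw [h]; exact Finset.mem_insert_self v _)
      have hwS : w ∉ G.neighborFinset v := fun h => hw (Finset.mem_insert_of_mem h)
      have hvS : v ∉ G.neighborFinset v := G.notMem_neighborFinset_self v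
      obtain ⟨p⟩ := conn.preconnected ⟨v, hvS⟩ ⟨w, hwS⟩
      by_cases hnil : p.Nil
      · exact hwv (congrArg Subtype.val hnil.eq).symm
      · obtain ⟨b, hadj, q', _⟩ := Walk.not_nil_iff.mp hnil
        have hb : G.Adj v b.1 := hadj
        exact b.2 ((SimpleGraph.mem_neighborFinset G v b.1).mpr hb)
  -- existence of a cycle
  have hcyc_ex : ∃ (b : V) (D : G.Walk b b), D.IsCycle := by
    obtain ⟨y, z, p, hppath, hplen⟩ :=
      Nat.sSup_mem (s := {n | ∃ (y z : V) (p : G.Walk y z), p.IsPath ∧ p.length = n})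
        ⟨0, x₀, x₀, Walk.nil, Walk.IsPath.nil, rfl⟩
        ⟨Fintype.card V, fun n hn' => by
          obtain ⟨y, z, p, hp, hl⟩ := hn'
          have := hp.length_lt; omega⟩
    have hpmax : ∀ (y' z' : V) (p' : G.Walk y' z'), p'.IsPath → p'.length ≤ p.length := by
      intro y' z' p' hp'
      rw [hplen]
      exact le_csSup ⟨Fintype.card V, fun n hn' => by
        obtain ⟨y, z, p, hp, hl⟩ := hn'
        have := hp.length_lt; omega⟩ ⟨y', z', p', hp', rfl⟩
    have hnbr : ∀ w, G.Adj y w → w ∈ p.support := by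
      intro w hadj
      by_contra hns
      have hpath2 : (Walk.cons hadj.symm p).IsPath := hppath.cons hns
      have := hpmax _ _ _ hpath2
      rw [Walk.length_cons] at this
      omega
    obtain ⟨y₂, hadjy₂, hy₂⟩ : ∃ w, G.Adj y w ∧ w ≠ p.getVert 1 := by
      by_contra hcon
      push_neg at hcon
      have hsub : G.neighborFinset y ⊆ {p.getVert 1} := by
        intro w hw
        rw [SimpleGraph.mem_neighborFinset] at hw
        rw [Finset.mem_singleton]
        exact hcon w hw
      have := Finset.card_le_card hsub
      rw [Finset.card_singleton, G.card_neighborFinset_eq_degree] at this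
      have := hdeg y
      omega
    have hymem : y₂ ∈ p.support := hnbr y₂ hadjy₂
    have hQpath : (p.takeUntil y₂ hymem).IsPath := hppath.takeUntil hymem
    have hxy : y ≠ y₂ := hadjy₂.ne
    have hQnonnil : ¬ (p.takeUntil y₂ hymem).Nil := Walk.not_nil_of_ne hxy
    have hQlen : 0 < (p.takeUntil y₂ hymem).length :=
      Walk.not_nil_iff_lt_length.mp hQnonnil
    have hQy₂ : (p.takeUntil y₂ hymem).getVert 1 ≠ y₂ := by
      have hspec := p.take_spec hymem
      have hgv : p.getVert 1 = ((p.takeUntil y₂ hymem).append (p.dropUntil y₂ hymem)).getVert 1 := by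
        rw [hspec]
      rw [Walk.getVert_append] at hgv
      rcases Nat.lt_or_ge 1 (p.takeUntil y₂ hymem).length with hlt | hge
      · rw [if_pos hlt] at hgv
        rw [← hgv]; exact fun h => hy₂ h.symm
      · have h1 : (p.takeUntil y₂ hymem).length = 1 := by omega
        rw [if_neg (by omega), h1] at hgv
        simp only [Nat.sub_self, Walk.getVert_zero] at hgv
        exact absurd hgv.symm hy₂
    obtain ⟨d, e₄, r₄, hQ⟩ := Walk.not_nil_iff.mp hQnonnil
    have hedge : s(y₂, y) ∉ (p.takeUntil y₂ hymem).edges := by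
      intro hmem
      rw [hQ, Walk.edges_cons, List.mem_cons] at hmem
      rcases hmem with hmem | hmem
      · rw [Sym2.eq_iff] at hmem
        rcases hmem with ⟨h1, h2⟩ | ⟨h1, h2⟩
        · exact hxy h1.symm
        · apply hQy₂
          rw [hQ]
          simpa using h1.symm
      · have hy_in : y ∈ r₄.support := Walk.snd_mem_support_of_mem_edges _ hmem
        have hnodup := hQpath.support_nodup
        rw [hQ, Walk.support_cons] at hnodup
        exact (List.nodup_cons.mp hnodup).1 hy_in
    exact ⟨y₂, Walk.cons hadjy₂.symm (p.takeUntil y₂ hymem),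
      (Walk.cons_isCycle_iff _ _).mpr ⟨hQpath, hedge⟩⟩
  -- maximum length cycle
  obtain ⟨a, C, hC, hCmax⟩ : ∃ (b : V) (D : G.Walk b b), D.IsCycle ∧
      ∀ (b' : V) (D' : G.Walk b' b'), D'.IsCycle → D'.length ≤ D.length := by
    have hbdd : BddAbove {n | ∃ (b : V) (D : G.Walk b b), D.IsCycle ∧ D.length = n} := by
      refine ⟨Fintype.card V, fun n hn' => ?_⟩
      obtain ⟨b, D, hD, hl⟩ := hn'
      have h1 : D.support.tail.length = D.length := by
        have := D.length_support
        have := List.length_tail (l := D.support)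
        omega
      have := hD.support_nodup.length_le_card
      omega
    obtain ⟨b₀, D₀, hD₀⟩ := hcyc_ex
    obtain ⟨b, D, hD, hl⟩ :=
      Nat.sSup_mem (s := {n | ∃ (b : V) (D : G.Walk b b), D.IsCycle ∧ D.length = n})
        ⟨D₀.length, b₀, D₀, hD₀, rfl⟩ hbdd
    refine ⟨b, D, hD, fun b' D' hD' => ?_⟩
    rw [hl]
    exact le_csSup hbdd ⟨b', D', hD', rfl⟩
  -- the cyclic order list
  set s : List V := C.support.tail with hs_def
  have hsnodup : s.Nodup := hC.support_nodup
  have hmemW : ∀ z, z ∈ C.support ↔ z ∈ s := by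
    obtain ⟨c₀, e₀, q₀, hC0, hc0, hq0⟩ := cycle_decomp C hC
    intro z
    have hsupp : C.support = a :: q₀.support := by rw [hC0]; simp
    rw [hs_def, ← hq0, hsupp]
    simp only [List.mem_cons]
    constructor
    · rintro (rfl | h)
      · exact q₀.end_mem_support
      · exact h
    · exact Or.inr
  have hrotlen : ∀ {u : V} (hu : u ∈ C.support), (C.rotate u hu).length = C.length := by
    intro u hu
    have h := (C.rotate_darts u hu).perm.length_eq
    rwa [Walk.length_darts, Walk.length_darts] at h
  have hadjnxt : ∀ u, u ∈ C.support → G.Adj u (nxt s u) := by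
    intro u hu
    obtain ⟨c, e, q, hd, hc, hq⟩ := cycle_decomp (C.rotate u hu) (hC.rotate hu)
    have hc' : c = nxt s u := by
      rw [hc]; exact nxt_congr (C.support_rotate u hu) (hC.rotate hu).support_nodup u
    rw [← hc']; exact e
  have hnxtW : ∀ u, u ∈ C.support → nxt s u ∈ C.support := by
    intro u hu
    exact (hmemW _).mpr (nxt_mem ((hmemW u).mp hu))
  by_cases hcover : ∀ z : V, z ∈ C.support
  · -- C is a Hamiltonian cycle
    intro _
    refine ⟨a, C, (Walk.isHamiltonianCycle_iff_isCycle_and_support_count_tail_eq_one).mpr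
      ⟨hC, fun z => ?_⟩⟩
    exact List.count_eq_one_of_mem hsnodup ((hmemW z).mp (hcover z))
  · push_neg at hcover
    obtain ⟨x, hx⟩ := hcover
    exfalso
    -- the component of x outside C
    set HP : V → Prop := fun w => ∃ p : G.Walk x w, ∀ z ∈ p.support, z ∉ C.support
      with hHP_def
    have hHPx : HP x := ⟨Walk.nil, by simpa using hx⟩
    have hHPnotW : ∀ w, HP w → w ∉ C.support := fun w hw => by
      obtain ⟨p, hp⟩ := hw; exact hp w p.end_mem_support
    have hHPclose : ∀ w w', HP w → G.Adj w w' → w' ∉ C.support → HP w' := by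
      rintro w w' ⟨p, hp⟩ hadj hw'
      refine ⟨p.concat hadj, fun z hz => ?_⟩
      rw [Walk.support_concat, List.mem_append] at hz
      rcases hz with hz | hz
      · exact hp z hz
      · simp only [List.mem_singleton] at hz; subst hz; exact hw'
    have hHPpath : ∀ h₁ h₂, HP h₁ → HP h₂ →
        ∃ P : G.Walk h₁ h₂, P.IsPath ∧ ∀ z ∈ P.support, z ∉ C.support := by
      rintro h₁ h₂ ⟨p₁, hp₁⟩ ⟨p₂, hp₂⟩
      refine ⟨(p₁.reverse.append p₂).bypass, Walk.bypass_isPath _, fun z hz => ?_⟩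
      have hz' := Walk.support_bypass_subset _ hz
      rw [Walk.mem_support_append_iff] at hz'
      rcases hz' with hz' | hz'
      · rw [Walk.support_reverse, List.mem_reverse] at hz'
        exact hp₁ z hz'
      · exact hp₂ z hz'
    -- Surgery A
    have surgA : ∀ u, u ∈ C.support → ∀ h₁ h₂, HP h₁ → HP h₂ →
        G.Adj u h₁ → G.Adj (nxt s u) h₂ → False := by
      intro u hu h₁ h₂ hH1 hH2 hadj1 hadj2
      obtain ⟨c, e, q, hd, hc, hq⟩ := cycle_decomp (C.rotate u hu) (hC.rotate hu)
      have hc' : c = nxt s u := by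
        rw [hc]; exact nxt_congr (C.support_rotate u hu) (hC.rotate hu).support_nodup u
      have hqnodup : q.support.Nodup := by
        rw [hq]; exact (hC.rotate hu).support_nodup
      have hqW : ∀ z ∈ q.support, z ∈ C.support := by
        intro z hz
        rw [hq] at hz
        exact (hmemW z).mpr ((C.support_rotate u hu).mem_iff.mp hz)
      obtain ⟨P, hPpath, hPW⟩ := hHPpath h₁ h₂ hH1 hH2
      have hadj2' : G.Adj h₂ c := by rw [hc']; exact hadj2.symm
      have hsupp : (P.append (Walk.cons hadj2' q)).support = P.support ++ q.support := by
        rw [Walk.support_append, Walk.support_cons, List.tail_cons]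
      have hinnerpath : (P.append (Walk.cons hadj2' q)).IsPath := by
        apply Walk.IsPath.mk'
        rw [hsupp]
        exact List.Nodup.append hPpath.support_nodup hqnodup
          (fun z hz hz' => hPW z hz (hqW z hz'))
      have hnotedge : s(u, h₁) ∉ (P.append (Walk.cons hadj2' q)).edges := by
        intro hmem
        rw [Walk.edges_append, Walk.edges_cons, List.mem_append, List.mem_cons] at hmem
        rcases hmem with hmem | hmem | hmem
        · exact hPW u (Walk.fst_mem_support_of_mem_edges _ hmem) hu
        · rw [Sym2.eq_iff] at hmem
          rcases hmem with ⟨h1, h2⟩ | ⟨h1, h2⟩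
          · exact (hHPnotW h₂ hH2) (h1 ▸ hu)
          · have hA := hadjnxt u hu
            rw [← hc', ← h1] at hA
            exact G.irrefl hA
        · exact (hHPnotW h₁ hH1) (hqW h₁ (Walk.snd_mem_support_of_mem_edges _ hmem))
      have hcyc : (Walk.cons hadj1 (P.append (Walk.cons hadj2' q))).IsCycle :=
        (Walk.cons_isCycle_iff _ _).mpr ⟨hinnerpath, hnotedge⟩
      have hle := hCmax _ _ hcyc
      have hqlen : q.length + 1 = C.length := by
        have h1 : (C.rotate u hu).length = q.length + 1 := by
          rw [hd, Walk.length_cons]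
        have h2 := hrotlen hu
        omega
      rw [Walk.length_cons, Walk.length_append, Walk.length_cons] at hle
      omega
    -- Surgery C
    have surgC : ∀ u v, u ∈ C.support → v ∈ C.support → u ≠ v →
        (∃ h, HP h ∧ G.Adj u h) → (∃ h, HP h ∧ G.Adj v h) →
        G.Adj (nxt s u) (nxt s v) → False := by
      rintro u v hu hv huv ⟨hu1, hHu1, hadju⟩ ⟨hv1, hHv1, hadjv⟩ hadjnn
      obtain ⟨c, e, q, hd, hc, hq⟩ := cycle_decomp (C.rotate u hu) (hC.rotate hu)
      have hc' : c = nxt s u := by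
        rw [hc]; exact nxt_congr (C.support_rotate u hu) (hC.rotate hu).support_nodup u
      have hqnodup : q.support.Nodup := by
        rw [hq]; exact (hC.rotate hu).support_nodup
      have hqmem : ∀ z, z ∈ q.support ↔ z ∈ C.support := by
        intro z; rw [hq]
        exact (C.support_rotate u hu).mem_iff.trans (hmemW z).symm
      have hconsCyc : (Walk.cons e q).IsCycle := hd ▸ (hC.rotate hu)
      have hvq : v ∈ q.support := (hqmem v).mpr hv
      set F := q.dropUntil v hvq with hF_def
      set E := q.takeUntil v hvq with hE_def
      have hdrop1 : F.getVert 1 = nxt q.support v :=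
        drop_getVert_one e q hconsCyc v hvq (Ne.symm huv)
      have hnxtq : nxt q.support v = nxt s v := by
        rw [hq]; exact nxt_congr (C.support_rotate u hu) (hC.rotate hu).support_nodup v
      have hFnonnil : ¬ F.Nil := Walk.not_nil_of_ne (Ne.symm huv)
      obtain ⟨d, e₂, r, hF⟩ := Walk.not_nil_iff.mp hFnonnil
      have hd2 : d = nxt s v := by
        have hgv : F.getVert 1 = d := by rw [hF]; simp
        rw [hgv] at hdrop1
        exact hdrop1.trans hnxtq
      subst hd2
      obtain ⟨P, hPpath, hPW⟩ := hHPpath hu1 hv1 hHu1 hHv1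
      have e₃ : G.Adj (nxt s v) c := by rw [hc']; exact hadjnn.symm
      have e₅ : G.Adj hu1 u := hadju.symm
      have hspec : E.append F = q := q.take_spec hvq
      have hqsupp : q.support = E.support ++ r.support := by
        rw [← hspec, Walk.support_append, hF, Walk.support_cons, List.tail_cons]
      obtain ⟨hEnodup, hrnodup, hErdisj⟩ := List.nodup_append.mp (hqsupp ▸ hqnodup)
      have hEsub : ∀ z ∈ E.support, z ∈ C.support := fun z hz =>
        (hqmem z).mp (by rw [hqsupp]; exact List.mem_append_left _ hz)
      have hrsub : ∀ z ∈ r.support, z ∈ C.support := fun z hz =>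
        (hqmem z).mp (by rw [hqsupp]; exact List.mem_append_right _ hz)
      have hsupp : (r.reverse.append (Walk.cons e₃ (E.append (Walk.cons hadjv P.reverse)))).support
          = r.support.reverse ++ (E.support ++ P.support.reverse) := by
        rw [Walk.support_append, Walk.support_cons, List.tail_cons, Walk.support_append,
          Walk.support_cons, List.tail_cons, Walk.support_reverse, Walk.support_reverse]
      have hinnerpath : (r.reverse.append (Walk.cons e₃ (E.append (Walk.cons hadjv P.reverse)))).IsPath := by
        apply Walk.IsPath.mk'
        rw [hsupp]
        refine List.Nodup.append (List.nodup_reverse.mpr hrnodup) ?_ ?_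
        · refine List.Nodup.append hEnodup (List.nodup_reverse.mpr hPpath.support_nodup) ?_
          intro z hzE hzP
          rw [List.mem_reverse] at hzP
          exact hPW z hzP (hEsub z hzE)
        · intro z hzr hzEP
          rw [List.mem_reverse] at hzr
          rw [List.mem_append] at hzEP
          rcases hzEP with hzE | hzP
          · exact hErdisj z hzE z hzr rfl
          · rw [List.mem_reverse] at hzP
            exact hPW z hzP (hrsub z hzr)
      have hnotedge : s(hu1, u) ∉ (r.reverse.append (Walk.cons e₃ (E.append (Walk.cons hadjv P.reverse)))).edges := by
        intro hmem
        rw [Walk.edges_append, Walk.edges_cons, Walk.edges_append, Walk.edges_cons,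
          List.mem_append, List.mem_cons, List.mem_append, List.mem_cons] at hmem
        rcases hmem with hmem | hmem | hmem | hmem | hmem
        · have h1 : hu1 ∈ r.reverse.support := Walk.fst_mem_support_of_mem_edges _ hmem
          rw [Walk.support_reverse, List.mem_reverse] at h1
          exact (hHPnotW hu1 hHu1) (hrsub hu1 h1)
        · rw [Sym2.eq_iff] at hmem
          rcases hmem with ⟨h1, h2⟩ | ⟨h1, h2⟩
          · exact (hHPnotW hu1 hHu1) (h1 ▸ hnxtW v hv)
          · apply hHPnotW hu1 hHu1
            rw [h1, hc']
            exact hnxtW u hu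
        · exact (hHPnotW hu1 hHu1) (hEsub hu1 (Walk.fst_mem_support_of_mem_edges _ hmem))
        · rw [Sym2.eq_iff] at hmem
          rcases hmem with ⟨h1, h2⟩ | ⟨h1, h2⟩
          · exact (hHPnotW hu1 hHu1) (h1 ▸ hv)
          · exact huv h2
        · have h1 : u ∈ P.reverse.support := Walk.snd_mem_support_of_mem_edges _ hmem
          rw [Walk.support_reverse, List.mem_reverse] at h1
          exact hPW u h1 hu
      have hcyc : (Walk.cons e₅ (r.reverse.append (Walk.cons e₃ (E.append (Walk.cons hadjv P.reverse))))).IsCycle :=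
        (Walk.cons_isCycle_iff _ _).mpr ⟨hinnerpath, hnotedge⟩
      have hle := hCmax _ _ hcyc
      have hEq1 : E.length + F.length = q.length := by
        have := congrArg Walk.length hspec
        rwa [Walk.length_append] at this
      have hEq2 : F.length = r.length + 1 := by
        rw [hF, Walk.length_cons]
      have hEq3 : q.length + 1 = C.length := by
        have h1 : (C.rotate u hu).length = q.length + 1 := by
          rw [hd, Walk.length_cons]
        have h2 := hrotlen hu
        omega
      rw [Walk.length_cons, Walk.length_append, Walk.length_cons, Walk.length_append,
        Walk.length_cons, Walk.length_reverse, Walk.length_reverse] at hle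
      omega
    -- attachment set
    set U : Finset V := Finset.univ.filter
      (fun w => w ∈ C.support ∧ ∃ h, HP h ∧ G.Adj w h) with hU_def
    have hUmem : ∀ w, w ∈ U ↔ (w ∈ C.support ∧ ∃ h, HP h ∧ G.Adj w h) := by
      intro w; rw [hU_def]; simp
    -- independent set of size U.card + 1
    have hUcard : U.card + 1 ≤ γ := by
      apply hγmax
      refine ⟨(U.image (fun w => nxt s w)) ∪ {x}, ?_, ?_⟩
      · intro y hy z hz hadj
        simp only [Finset.mem_union, Finset.mem_image, Finset.mem_singleton] at hy hz
        rcases hy with ⟨u, hu, rfl⟩ | hyx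
        · rcases hz with ⟨v, hv, rfl⟩ | hzx
          · rcases (hUmem u).mp hu with ⟨huW, hu1, hHu1, hadju⟩
            rcases (hUmem v).mp hv with ⟨hvW, hv1, hHv1, hadjv⟩
            rcases eq_or_ne u v with rfl | huv
            · exact G.irrefl hadj
            · exact surgC u v huW hvW huv ⟨hu1, hHu1, hadju⟩ ⟨hv1, hHv1, hadjv⟩ hadj
          · rcases (hUmem u).mp hu with ⟨huW, hu1, hHu1, hadju⟩
            rw [hzx] at hadj
            exact surgA u huW hu1 x hHu1 hHPx hadju hadj
        · rw [hyx] at hadj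
          rcases hz with ⟨v, hv, rfl⟩ | hzx
          · rcases (hUmem v).mp hv with ⟨hvW, hv1, hHv1, hadjv⟩
            exact surgA v hvW hv1 x hHv1 hHPx hadjv hadj.symm
          · rw [hzx] at hadj
            exact G.irrefl hadj
      · rw [Finset.card_union_of_disjoint, Finset.card_image_of_injOn,
          Finset.card_singleton]
        · intro p hp q hq hpq
          have hpW : p ∈ s := (hmemW p).mp ((hUmem p).mp hp).1
          have hqW : q ∈ s := (hmemW q).mp ((hUmem q).mp hq).1
          exact nxt_injOn hsnodup hpW hqW hpq
        · rw [Finset.disjoint_singleton_right]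
          intro hmem
          rw [Finset.mem_image] at hmem
          obtain ⟨u, hu, hux⟩ := hmem
          apply hx
          rw [← hux]
          exact hnxtW u ((hUmem u).mp hu).1
    have hUk : U.card < k := by omega
    have conn := hconn2 U hUk
    -- target vertex on C but not in U and not in HP
    obtain ⟨t₀, ht₀W, ht₀U⟩ : ∃ t₀, t₀ ∈ C.support ∧ t₀ ∉ U := by
      rcases Finset.eq_empty_or_nonempty U with hU | hU
      · exact ⟨a, C.start_mem_support, by simp [hU]⟩
      · obtain ⟨u₀, hu₀⟩ := hU
        rcases (hUmem u₀).mp hu₀ with ⟨hu₀W, h₀, hH₀, hadj₀⟩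
        refine ⟨nxt s u₀, hnxtW u₀ hu₀W, fun ht => ?_⟩
        rcases (hUmem _).mp ht with ⟨htW, h', hH', hadj'⟩
        exact surgA u₀ hu₀W h₀ h' hH₀ hH' hadj₀ hadj'
    -- walks in the complement of U starting in the component stay in it
    have stay : ∀ (w₁ w₂ : {v : V | v ∉ U}) (p : (G.induce {v : V | v ∉ U}).Walk w₁ w₂),
        HP w₁.1 → HP w₂.1 := by
      intro w₁ w₂ p
      induction p with
      | nil => exact id
      | @cons w₁ b w₂ h p ih =>
        intro h₁
        apply ih
        have hadj : G.Adj w₁.1 b.1 := h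
        by_cases hbW : b.1 ∈ C.support
        · exact absurd ((hUmem b.1).mpr ⟨hbW, ⟨w₁.1, h₁, hadj.symm⟩⟩) b.2
        · exact hHPclose _ _ h₁ hadj hbW
    have hxU : x ∉ U := fun h => hx ((hUmem x).mp h).1
    obtain ⟨p⟩ := conn.preconnected ⟨x, hxU⟩ ⟨t₀, ht₀U⟩
    exact (hHPnotW t₀ (stay _ _ p hHPx)) ht₀W
end

section
/- Let G be a graph with n ≥ 1 vertices and let α, β be real numbers with α ≥ β > 0. Then the largest eigenvalue λ₁ and the smallest eigenvalue λₙ of M(G; α, β) satisfy λ₁² ≥ (α + β)²·(Σ_{u ∈ V} d(u)²)/n ≥ λₙ², where d denotes vertex degree. -/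
open Finset

theorem eigenvalue_sq_bounds
    {V : Type*} [Fintype V] [DecidableEq V] [Nonempty V]
    (G : SimpleGraph V) [DecidableRel G.Adj]
    (α β : ℝ) (hαβ : β ≤ α) (hβ : 0 < β)
    (M : Matrix V V ℝ)
    (hMdef : M = α • Matrix.diagonal (fun v => (G.degree v : ℝ)) + β • G.adjMatrix ℝ)
    (hHerm : M.IsHermitian)
    (lam1 lamn : ℝ)
    (hlam1 : lam1 = ⨆ i, hHerm.eigenvalues i)
    (hlamn : lamn = ⨅ i, hHerm.eigenvalues i) :
    lam1 ^ 2 ≥ (α + β) ^ 2 * (∑ u, (G.degree u : ℝ) ^ 2) / (Fintype.card V : ℝ) ∧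
      (α + β) ^ 2 * (∑ u, (G.degree u : ℝ) ^ 2) / (Fintype.card V : ℝ) ≥ lamn ^ 2 := by
  have hrow : ∀ v : V, ∑ u, G.adjMatrix ℝ v u = G.degree v := fun v => by
    have := G.adjMatrix_mulVec_const_apply (α := ℝ) (a := 1) (v := v)
    simpa [Matrix.mulVec, dotProduct] using this
  have hmv : ∀ x : V → ℝ, ∀ v, (M.mulVec x) v
      = α * G.degree v * x v + β * ∑ u, G.adjMatrix ℝ v u * x u := by
    intro x v
    rw [hMdef]
    simp only [Matrix.mulVec, dotProduct, Matrix.add_apply, Matrix.smul_apply,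
      smul_eq_mul, add_mul, Finset.mul_sum]
    rw [Finset.sum_add_distrib]
    congr 1
    · rw [Finset.sum_eq_single v (fun u _ h => by simp [Matrix.diagonal_apply_ne' _ h]) (by simp)]
      simp [mul_comm]
    · exact Finset.sum_congr rfl fun u _ => by ring
  -- positive semidefiniteness
  have hpsd : M.PosSemidef := by
    refine Matrix.posSemidef_iff_dotProduct_mulVec.mpr ⟨hHerm, fun x => ?_⟩
    have hQ : dotProduct (star x) (M.mulVec x)
        = ∑ v, ∑ u, G.adjMatrix ℝ v u * (α * x v ^ 2 + β * (x v * x u)) := by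
      simp only [dotProduct, Pi.star_apply, star_trivial]
      refine Finset.sum_congr rfl fun v _ => ?_
      rw [show x v * M.mulVec x v = x v * (α * G.degree v * x v
          + β * ∑ u, G.adjMatrix ℝ v u * x u) by rw [hmv x v]]
      rw [Finset.sum_congr rfl fun u _ =>
        (show G.adjMatrix ℝ v u * (α * x v ^ 2 + β * (x v * x u))
          = α * x v ^ 2 * G.adjMatrix ℝ v u + β * x v * (G.adjMatrix ℝ v u * x u) by ring),
        Finset.sum_add_distrib, ← Finset.mul_sum, ← Finset.mul_sum, hrow v]
      ring
    rw [hQ]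
    have h2 : (0:ℝ) ≤ ∑ v, ∑ u, G.adjMatrix ℝ v u * (α * x v ^ 2 + β * (x v * x u))
        + ∑ v, ∑ u, G.adjMatrix ℝ v u * (α * x v ^ 2 + β * (x v * x u)) := by
      nth_rewrite 2 [Finset.sum_comm]
      rw [← Finset.sum_add_distrib]
      refine Finset.sum_nonneg fun v _ => ?_
      rw [← Finset.sum_add_distrib]
      refine Finset.sum_nonneg fun u _ => ?_
      rw [show G.adjMatrix ℝ u v = G.adjMatrix ℝ v u by
        simp [SimpleGraph.adjMatrix_apply, G.adj_comm]]
      rw [← mul_add]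
      refine mul_nonneg (by simp [SimpleGraph.adjMatrix_apply]; positivity) ?_
      nlinarith [sq_nonneg (x v + x u), sq_nonneg (x v), sq_nonneg (x u)]
    linarith
  -- spectral setup
  set b := hHerm.eigenvectorBasis with hb
  set μ := hHerm.eigenvalues with hmu
  set X : EuclideanSpace ℝ V := WithLp.toLp 2 (fun _ => (1:ℝ)) with hX
  set Y : EuclideanSpace ℝ V := WithLp.toLp 2 (M.mulVec X) with hY
  have hT : Matrix.transpose M = M := by
    have := hHerm
    rwa [Matrix.IsHermitian, Matrix.conjTranspose_eq_transpose_of_trivial] at this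
  set c : V → ℝ := fun i => inner ℝ (b i) X with hc
  have hA : ∀ i, (inner ℝ (b i) Y : ℝ) = μ i * c i := by
    intro i
    have h1 : (inner ℝ (b i) Y : ℝ) = dotProduct (⇑(b i)) (M.mulVec X) := by
      simp [PiLp.inner_apply, dotProduct, RCLike.inner_apply, hY, mul_comm]
    have h2 : (c i : ℝ) = dotProduct (⇑(b i)) X := by
      simp [hc, PiLp.inner_apply, dotProduct, RCLike.inner_apply, mul_comm]
    rw [h1, h2, Matrix.dotProduct_mulVec, ← Matrix.mulVec_transpose, hT,
      hHerm.mulVec_eigenvectorBasis, smul_dotProduct, smul_eq_mul]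
  have hYv : ∀ v, Y v = (α + β) * G.degree v := by
    intro v
    rw [hY]
    show (M.mulVec X) v = _
    rw [hmv X v]
    simp only [hX]
    rw [show (∑ u, G.adjMatrix ℝ v u * (1:ℝ)) = ∑ u, G.adjMatrix ℝ v u by
      exact Finset.sum_congr rfl fun u _ => mul_one _, hrow v]
    ring
  -- sums of squares of coefficients
  have hB : ∑ i, (μ i * c i) ^ 2 = (α + β) ^ 2 * ∑ u, (G.degree u : ℝ) ^ 2 := by
    have h1 := b.sum_inner_mul_inner Y Y
    have h2 : ∀ i, (inner ℝ Y (b i) : ℝ) = μ i * c i := fun i => by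
      rw [real_inner_comm]; exact hA i
    rw [Finset.sum_congr rfl fun i _ => by rw [h2 i, hA i, ← sq]] at h1
    rw [h1]
    rw [show (inner ℝ Y Y : ℝ) = ∑ v, Y v * Y v by
      rw [PiLp.inner_apply]; simp only [RCLike.inner_apply, conj_trivial]]
    rw [Finset.mul_sum]
    exact Finset.sum_congr rfl fun v _ => by rw [hYv v]; ring
  have hC : ∑ i, (c i) ^ 2 = (Fintype.card V : ℝ) := by
    have h1 := b.sum_inner_mul_inner X X
    have h2 : ∀ i, (inner ℝ X (b i) : ℝ) = c i := fun i => by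
      rw [real_inner_comm]
    rw [Finset.sum_congr rfl fun i _ => by rw [h2 i, show (inner ℝ (b i) X : ℝ) = c i from rfl,
      ← sq]] at h1
    rw [h1, PiLp.inner_apply]
    simp [PiLp.inner_apply, RCLike.inner_apply, hX, Finset.card_univ]
  -- eigenvalue bounds
  have hμ0 : ∀ i, 0 ≤ μ i := fun i => hpsd.eigenvalues_nonneg i
  have hle1 : ∀ i, μ i ≤ lam1 := fun i => hlam1 ▸ le_ciSup (Set.Finite.bddAbove
    (Set.finite_range _)) i
  have hlen : ∀ i, lamn ≤ μ i := fun i => hlamn ▸ ciInf_le (Set.Finite.bddBelow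
    (Set.finite_range _)) i
  have hlamn0 : 0 ≤ lamn := hlamn ▸ le_ciInf hμ0
  have hlam10 : 0 ≤ lam1 := le_trans hlamn0 (le_trans (hlen (Classical.arbitrary V))
    (hle1 (Classical.arbitrary V)))
  have hn : (0:ℝ) < (Fintype.card V : ℝ) := by
    exact_mod_cast Fintype.card_pos
  -- upper bound
  have hup : (α + β) ^ 2 * ∑ u, (G.degree u : ℝ) ^ 2 ≤ lam1 ^ 2 * (Fintype.card V : ℝ) := by
    rw [← hB, ← hC, Finset.mul_sum]
    refine Finset.sum_le_sum fun i _ => ?_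
    rw [mul_pow]
    have : μ i ^ 2 ≤ lam1 ^ 2 := pow_le_pow_left₀ (hμ0 i) (hle1 i) 2
    nlinarith [sq_nonneg (c i)]
  have hdown : lamn ^ 2 * (Fintype.card V : ℝ) ≤ (α + β) ^ 2 * ∑ u, (G.degree u : ℝ) ^ 2 := by
    rw [← hB, ← hC, Finset.mul_sum]
    refine Finset.sum_le_sum fun i _ => ?_
    rw [mul_pow]
    have : lamn ^ 2 ≤ μ i ^ 2 := pow_le_pow_left₀ hlamn0 (hlen i) 2
    nlinarith [sq_nonneg (c i)]
  constructor
  · rw [ge_iff_le, div_le_iff₀ hn]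
    exact hup
  · rw [ge_iff_le, le_div_iff₀ hn]
    exact hdown
end

section
/- Let G = (V, E) be a graph with n vertices, e edges, and minimum degree δ, and let I ⊆ V be an independent set with |I| = k + 1 where k + 1 < n. Then (k + 1)δ² + e²/(n − k − 1) ≤ Σ_{v ∈ V} d(v)², with equality if and only if d(u) = δ for each u ∈ I, Σ_{v ∈ V − I} d(v) = e (so that G is bipartite with partition sets I and V − I), and d(v) = Δ for each v ∈ V − I, where d denotes vertex degree and Δ the maximum degree. -/
open Finset

private lemma cs_eq_lemma {V : Type*} [DecidableEq V] (s : Finset V) (f : V → ℝ)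
    (hm : 0 < (s.card : ℝ)) :
    (∑ v ∈ s, f v) ^ 2 / (s.card : ℝ) ≤ ∑ v ∈ s, (f v) ^ 2 ∧
    ((∑ v ∈ s, f v) ^ 2 / (s.card : ℝ) = ∑ v ∈ s, (f v) ^ 2 ↔
      ∀ v ∈ s, f v = (∑ v ∈ s, f v) / (s.card : ℝ)) := by
  set m : ℝ := (s.card : ℝ) with hmdef
  set S : ℝ := ∑ v ∈ s, f v with hSdef
  set μ : ℝ := S / m with hμdef
  have hmne : m ≠ 0 := ne_of_gt hm
  have hmμ : m * μ = S := by rw [hμdef]; field_simp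
  have hSm : S ^ 2 / m = μ * S := by rw [hμdef]; field_simp
  have h2 : m * μ ^ 2 = S * μ := by rw [pow_two, ← mul_assoc, hmμ]
  have key : ∑ v ∈ s, (f v - μ) ^ 2 = (∑ v ∈ s, (f v) ^ 2) - S ^ 2 / m := by
    have h1 : ∑ v ∈ s, (f v - μ) ^ 2
        = (∑ v ∈ s, (f v) ^ 2) - (2 * μ) * S + m * μ ^ 2 := by
      calc ∑ v ∈ s, (f v - μ) ^ 2
          = ∑ v ∈ s, ((f v) ^ 2 - (2 * μ) * f v + μ ^ 2) := by
            apply Finset.sum_congr rfl; intros; ring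
        _ = (∑ v ∈ s, (f v) ^ 2) - (2 * μ) * S + m * μ ^ 2 := by
            rw [Finset.sum_add_distrib, Finset.sum_sub_distrib, ← Finset.mul_sum,
              Finset.sum_const, nsmul_eq_mul, ← hSdef, ← hmdef]
    rw [h1, hSm]
    linarith [h2]
  have hnonneg : 0 ≤ ∑ v ∈ s, (f v - μ) ^ 2 :=
    Finset.sum_nonneg fun v _ => sq_nonneg _
  constructor
  · linarith [key]
  · constructor
    · intro heq
      have hz : ∑ v ∈ s, (f v - μ) ^ 2 = 0 := by linarith [key]
      intro v hv
      have h3 := (Finset.sum_eq_zero_iff_of_nonneg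
        (fun v _ => sq_nonneg (f v - μ))).mp hz v hv
      have h4 : f v - μ = 0 := by
        exact pow_eq_zero_iff (n := 2) (by norm_num) |>.mp h3
      linarith
    · intro hconst
      have hz : ∑ v ∈ s, (f v - μ) ^ 2 = 0 :=
        Finset.sum_eq_zero fun v hv => by rw [hconst v hv]; ring
      linarith [key]

private lemma edge_card_le_sum_deg_compl {V : Type*} [Fintype V] [DecidableEq V]
    (G : SimpleGraph V) [DecidableRel G.Adj] (I : Finset V)
    (hI : ∀ x ∈ I, ∀ y ∈ I, ¬ G.Adj x y) :
    G.edgeFinset.card ≤ ∑ v ∈ Iᶜ, G.degree v := by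
  have h1 : G.edgeFinset ⊆ Iᶜ.biUnion (fun v => G.incidenceFinset v) := by
    intro a ha
    rw [SimpleGraph.mem_edgeFinset] at ha
    induction a with
    | _ x y =>
      have hadj : G.Adj x y := ha
      rw [Finset.mem_biUnion]
      by_cases hx : x ∈ I
      · refine ⟨y, Finset.mem_compl.mpr fun hy => hI x hx y hy hadj, ?_⟩
        rw [SimpleGraph.mem_incidenceFinset, SimpleGraph.mk'_mem_incidenceSet_right_iff]
        exact hadj
      · refine ⟨x, Finset.mem_compl.mpr hx, ?_⟩
        rw [SimpleGraph.mem_incidenceFinset, SimpleGraph.mk'_mem_incidenceSet_left_iff]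
        exact hadj
  calc G.edgeFinset.card
      ≤ (Iᶜ.biUnion (fun v => G.incidenceFinset v)).card := Finset.card_le_card h1
    _ ≤ ∑ v ∈ Iᶜ, (G.incidenceFinset v).card := Finset.card_biUnion_le
    _ = ∑ v ∈ Iᶜ, G.degree v := by simp [SimpleGraph.card_incidenceFinset_eq_degree]

set_option maxHeartbeats 4000000 in
theorem degree_sq_sum_lower_bound_with_equality
    {V : Type*} [Fintype V] [DecidableEq V]
    (G : SimpleGraph V) [DecidableRel G.Adj]
    (I : Finset V)
    (hI : ∀ x ∈ I, ∀ y ∈ I, ¬ G.Adj x y)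
    (k : ℕ) (hcard : I.card = k + 1) (hkn : k + 1 < Fintype.card V) :
    ((k : ℝ) + 1) * (G.minDegree : ℝ) ^ 2 +
        (G.edgeFinset.card : ℝ) ^ 2 / ((Fintype.card V : ℝ) - (k : ℝ) - 1) ≤
      ∑ v, (G.degree v : ℝ) ^ 2 ∧
    (((k : ℝ) + 1) * (G.minDegree : ℝ) ^ 2 +
        (G.edgeFinset.card : ℝ) ^ 2 / ((Fintype.card V : ℝ) - (k : ℝ) - 1) =
      ∑ v, (G.degree v : ℝ) ^ 2 ↔
        (∀ u ∈ I, G.degree u = G.minDegree) ∧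
        (∑ v ∈ Iᶜ, G.degree v = G.edgeFinset.card) ∧
        (∀ v ∈ Iᶜ, G.degree v = G.maxDegree)) := by
  have hne : Nonempty V := Fintype.card_pos_iff.mp (by omega)
  have hIc : Iᶜ.card = Fintype.card V - (k + 1) := by
    rw [Finset.card_compl, hcard]
  have hIcpos : 0 < Iᶜ.card := by omega
  have hmR : ((Iᶜ.card : ℕ) : ℝ) = (Fintype.card V : ℝ) - (k : ℝ) - 1 := by
    rw [hIc]
    push_cast [Nat.cast_sub hkn.le]
    ring
  have hm : (0 : ℝ) < ((Iᶜ.card : ℕ) : ℝ) := by positivity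
  -- nat inequality e ≤ sum of degrees over Iᶜ
  have hsumC : G.edgeFinset.card ≤ ∑ v ∈ Iᶜ, G.degree v :=
    edge_card_le_sum_deg_compl G I hI
  have hSnat : (∑ v ∈ Iᶜ, (G.degree v : ℝ)) = ((∑ v ∈ Iᶜ, G.degree v : ℕ) : ℝ) := by
    push_cast; rfl
  have heS : (G.edgeFinset.card : ℝ) ≤ ∑ v ∈ Iᶜ, (G.degree v : ℝ) := by
    rw [hSnat]; exact_mod_cast hsumC
  have hepos : (0 : ℝ) ≤ (G.edgeFinset.card : ℝ) := by positivity
  have hsplit : (∑ v ∈ I, (G.degree v : ℝ) ^ 2) + ∑ v ∈ Iᶜ, (G.degree v : ℝ) ^ 2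
      = ∑ v, (G.degree v : ℝ) ^ 2 :=
    Finset.sum_add_sum_compl I _
  -- A1
  have hδle : ∀ v : V, (G.minDegree : ℝ) ≤ (G.degree v : ℝ) := fun v => by
    exact_mod_cast G.minDegree_le_degree v
  have hδ0 : (0:ℝ) ≤ (G.minDegree : ℝ) := by positivity
  have hconstI : ((k : ℝ) + 1) * (G.minDegree : ℝ) ^ 2
      = ∑ _v ∈ I, (G.minDegree : ℝ) ^ 2 := by
    rw [Finset.sum_const, hcard]; push_cast; ring
  have hA1 : ((k : ℝ) + 1) * (G.minDegree : ℝ) ^ 2 ≤ ∑ v ∈ I, (G.degree v : ℝ) ^ 2 := by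
    rw [hconstI]
    exact Finset.sum_le_sum fun v _ => pow_le_pow_left₀ hδ0 (hδle v) 2
  have hA1eq : (((k : ℝ) + 1) * (G.minDegree : ℝ) ^ 2 = ∑ v ∈ I, (G.degree v : ℝ) ^ 2) ↔
      ∀ u ∈ I, G.degree u = G.minDegree := by
    rw [hconstI]
    constructor
    · intro heq u hu
      have hz : ∑ v ∈ I, ((G.degree v : ℝ) ^ 2 - (G.minDegree : ℝ) ^ 2) = 0 := by
        rw [Finset.sum_sub_distrib, ← heq]; ring
      have h3 := (Finset.sum_eq_zero_iff_of_nonneg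
        (fun v _ => by nlinarith [hδle v, hδ0])).mp hz u hu
      have hDu : (G.degree u : ℝ) = (G.minDegree : ℝ) := by nlinarith [hδle u, hδ0]
      exact_mod_cast hDu
    · intro h
      apply Finset.sum_congr rfl
      intro v hv
      rw [h v hv]
  -- A3 (Cauchy–Schwarz on Iᶜ)
  obtain ⟨hA3, hA3eq⟩ := cs_eq_lemma Iᶜ (fun v => (G.degree v : ℝ)) hm
  replace hA3 : (∑ v ∈ Iᶜ, (G.degree v : ℝ)) ^ 2 / ((Iᶜ.card : ℕ) : ℝ)
      ≤ ∑ v ∈ Iᶜ, (G.degree v : ℝ) ^ 2 := hA3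
  replace hA3eq : ((∑ v ∈ Iᶜ, (G.degree v : ℝ)) ^ 2 / ((Iᶜ.card : ℕ) : ℝ)
        = ∑ v ∈ Iᶜ, (G.degree v : ℝ) ^ 2) ↔
      ∀ v ∈ Iᶜ, (G.degree v : ℝ) = (∑ v ∈ Iᶜ, (G.degree v : ℝ)) / ((Iᶜ.card : ℕ) : ℝ) := hA3eq
  -- A2
  have hsq : (G.edgeFinset.card : ℝ) ^ 2 ≤ (∑ v ∈ Iᶜ, (G.degree v : ℝ)) ^ 2 :=
    pow_le_pow_left₀ hepos heS 2
  have hA2 : (G.edgeFinset.card : ℝ) ^ 2 / ((Iᶜ.card : ℕ) : ℝ)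
      ≤ (∑ v ∈ Iᶜ, (G.degree v : ℝ)) ^ 2 / ((Iᶜ.card : ℕ) : ℝ) := by
    gcongr
  have hA2eq : ((G.edgeFinset.card : ℝ) ^ 2 / ((Iᶜ.card : ℕ) : ℝ)
      = (∑ v ∈ Iᶜ, (G.degree v : ℝ)) ^ 2 / ((Iᶜ.card : ℕ) : ℝ)) ↔
      ∑ v ∈ Iᶜ, G.degree v = G.edgeFinset.card := by
    constructor
    · intro h
      have hc : ((Iᶜ.card : ℕ) : ℝ) ≠ 0 := ne_of_gt hm
      have hsq' : (G.edgeFinset.card : ℝ) ^ 2 = (∑ v ∈ Iᶜ, (G.degree v : ℝ)) ^ 2 := by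
        have h' := congrArg (fun x => x * ((Iᶜ.card : ℕ) : ℝ)) h
        simpa [div_mul_cancel₀, hc] using h'
      have hle : (∑ v ∈ Iᶜ, (G.degree v : ℝ)) ≤ (G.edgeFinset.card : ℝ) := by
        nlinarith [heS, hepos, hsq']
      have : (∑ v ∈ Iᶜ, (G.degree v : ℝ)) = (G.edgeFinset.card : ℝ) :=
        le_antisymm hle heS
      rw [hSnat] at this
      exact_mod_cast this
    · intro h
      have : (∑ v ∈ Iᶜ, (G.degree v : ℝ)) = (G.edgeFinset.card : ℝ) := by
        rw [hSnat]; exact_mod_cast h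
      rw [this]
  rw [← hmR, ← hsplit]
  set E := (G.edgeFinset.card : ℝ) with hE
  set C := ((Iᶜ.card : ℕ) : ℝ) with hC
  set T1 := ((k : ℝ) + 1) * (G.minDegree : ℝ) ^ 2 with hT1
  set P1 := ∑ v ∈ I, (G.degree v : ℝ) ^ 2 with hP1
  set P2 := ∑ v ∈ Iᶜ, (G.degree v : ℝ) ^ 2 with hP2
  set SC := ∑ v ∈ Iᶜ, (G.degree v : ℝ) with hSC
  clear_value SC P2 P1 T1 C E
  clear hsplit hSnat hconstI heS hsq hepos hsumC hδle hδ0 hI hIc hmR hcard hkn hIcpos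
  constructor
  · linarith [hA1, hA2, hA3]
  · constructor
    · intro heq
      have e1 : T1 = P1 := by linarith [hA1, hA2, hA3]
      have e2 : E ^ 2 / C = SC ^ 2 / C := by linarith [hA1, hA2, hA3]
      have e3 : SC ^ 2 / C = P2 := by linarith [hA1, hA2, hA3]
      have c1 := hA1eq.mp e1
      have c2 := hA2eq.mp e2
      refine ⟨c1, c2, ?_⟩
      have hconst := hA3eq.mp e3
      intro v hv
      obtain ⟨v₀, hv₀⟩ := G.exists_maximal_degree_vertex
      by_cases hv₀I : v₀ ∈ I
      · have h5 : G.degree v₀ = G.minDegree := c1 v₀ hv₀I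
        have h6 : G.maxDegree = G.minDegree := by rw [hv₀, h5]
        have h7 := G.minDegree_le_degree v
        have h8 := G.degree_le_maxDegree v
        omega
      · have hv₀c : v₀ ∈ Iᶜ := Finset.mem_compl.mpr hv₀I
        have h9 : (G.degree v : ℝ) = (G.degree v₀ : ℝ) := by
          rw [hconst v hv, hconst v₀ hv₀c]
        have h10 : G.degree v = G.degree v₀ := by exact_mod_cast h9
        rw [h10, ← hv₀]
    · rintro ⟨c1, c2, c3⟩
      have e1 : T1 = P1 := hA1eq.mpr c1
      have hSval : SC = C * (G.maxDegree : ℝ) := by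
        rw [hSC, hC]
        calc (∑ v ∈ Iᶜ, (G.degree v : ℝ)) = ∑ _v ∈ Iᶜ, (G.maxDegree : ℝ) :=
              Finset.sum_congr rfl fun v hv => by rw [c3 v hv]
          _ = ((Iᶜ.card : ℕ) : ℝ) * (G.maxDegree : ℝ) := by
              rw [Finset.sum_const, nsmul_eq_mul]
      have e3 : SC ^ 2 / C = P2 := by
        apply hA3eq.mpr
        intro v hv
        rw [c3 v hv, hSval, mul_comm, mul_div_assoc, div_self (ne_of_gt hm), mul_one]
      have e2 : E ^ 2 / C = SC ^ 2 / C := hA2eq.mpr c2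
      linarith [e1, e2, e3]
end
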